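/- arXiv:1306.5858 — 2 statements merged into one kernel-verified Lean document; each statement's English description precedes it below -/
import Mathlib

section
/- (Lemma 1, flipping) Let P = (a_1, a_2, ..., a_k) be a legal plan from the initial state I of an MA-STRIPS problem Π, and let a_i, a_{i+1} be two consecutive actions of P belonging to two different agents, at least one of which is private. Then P' = (a_1, ..., a_{i−1}, a_{i+1}, a_i, a_{i+2}, ..., a_k) is a legal plan from I for Π, and the final state produced by P' from I equals the final state produced by P from I. -/
/-- A STRIPS action over a set of propositions `P`. -/
structure StripsAction (P : Type*) where
  pre : Set P
  add : Set P
  del : Set P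

namespace StripsAction

variable {P : Type*}

/-- The variable set of an action: all propositions it mentions. -/
def varset (a : StripsAction P) : Set P := a.pre ∪ a.add ∪ a.del

/-- An action is applicable in state `s` iff its preconditions hold in `s`. -/
def Applicable (a : StripsAction P) (s : Set P) : Prop := a.pre ⊆ s

/-- Applying an action to a state: `a(s) = (s \ del(a)) ∪ add(a)`. -/
def apply (a : StripsAction P) (s : Set P) : Set P := (s \ a.del) ∪ a.add

end StripsAction

/-- The state obtained by applying a sequence of actions in order. -/
def applySeq {P : Type*} : List (StripsAction P) → Set P → Set P
  | [], s => s
  | a :: rest, s => applySeq rest (a.apply s)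

/-- A sequence of actions is a legal plan from `s` iff each action is applicable in the
state obtained by applying the previous ones in order. -/
def LegalPlan {P : Type*} : List (StripsAction P) → Set P → Prop
  | [], _ => True
  | a :: rest, s => a.Applicable s ∧ LegalPlan rest (a.apply s)

/-- An MA-STRIPS problem: pairwise-disjoint finite action sets `A i` (one per agent),
an initial state and a goal. -/
structure MAProblem (P Ag : Type*) where
  A : Ag → Set (StripsAction P)
  disjoint : ∀ i j : Ag, i ≠ j → Disjoint (A i) (A j)
  finite : ∀ i : Ag, (A i).Finite
  I : Set P
  G : Set P

namespace MAProblem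

variable {P Ag : Type*}

/-- Proposition `p` is private to agent `i` iff every action mentioning `p` belongs to
`A i`. -/
def PrivateProp (pb : MAProblem P Ag) (p : P) (i : Ag) : Prop :=
  ∀ j : Ag, ∀ a ∈ pb.A j, p ∈ a.varset → j = i

/-- An action `a ∈ A i` is private iff every proposition it mentions is private to `i`. -/
def PrivateAction (pb : MAProblem P Ag) (a : StripsAction P) (i : Ag) : Prop :=
  a ∈ pb.A i ∧ ∀ p ∈ a.varset, pb.PrivateProp p i

/-- An action of the problem is public iff it is not private. -/
def PublicAction (pb : MAProblem P Ag) (a : StripsAction P) : Prop :=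
  (∃ i, a ∈ pb.A i) ∧ ∀ i : Ag, ¬ pb.PrivateAction a i

end MAProblem

/-! A private action shares no proposition with any action of another agent, so neither of
two such adjacent actions can enable or disable the other, and their effects on a state
commute. -/

namespace StripsAction

variable {P : Type*} {a b : StripsAction P} {s : Set P}

lemma pre_subset_varset (a : StripsAction P) : a.pre ⊆ a.varset := fun _ hp => Or.inl (Or.inl hp)

lemma add_subset_varset (a : StripsAction P) : a.add ⊆ a.varset := fun _ hp => Or.inl (Or.inr hp)

lemma del_subset_varset (a : StripsAction P) : a.del ⊆ a.varset := fun _ hp => Or.inr hp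

lemma applicable_of_applicable_apply (hb : b.Applicable (a.apply s))
    (hd : Disjoint b.pre a.add) : b.Applicable s := fun _ hp =>
  (hb hp).resolve_right (Set.disjoint_left.1 hd hp) |>.1

lemma applicable_apply_of_applicable (ha : a.Applicable s)
    (hd : Disjoint a.pre b.del) : a.Applicable (b.apply s) := fun _ hp =>
  Or.inl ⟨ha hp, Set.disjoint_left.1 hd hp⟩

lemma apply_comm (hab : Disjoint a.add b.del) (hba : Disjoint b.add a.del) (s : Set P) :
    a.apply (b.apply s) = b.apply (a.apply s) := by
  ext p
  have := @Set.disjoint_left.1 hab p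
  have := @Set.disjoint_left.1 hba p
  simp only [apply, Set.mem_union, Set.mem_sdiff]
  tauto

end StripsAction

section Plans

variable {P : Type*}

@[simp]
lemma applySeq_append (L₁ L₂ : List (StripsAction P)) (s : Set P) :
    applySeq (L₁ ++ L₂) s = applySeq L₂ (applySeq L₁ s) := by
  induction L₁ generalizing s with
  | nil => rfl
  | cons a L₁ ih => exact ih _

lemma legalPlan_append {L₁ L₂ : List (StripsAction P)} {s : Set P} :
    LegalPlan (L₁ ++ L₂) s ↔ LegalPlan L₁ s ∧ LegalPlan L₂ (applySeq L₁ s) := by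
  induction L₁ generalizing s with
  | nil => simp [LegalPlan, applySeq]
  | cons a L₁ ih => simp only [List.cons_append, LegalPlan, applySeq, ih, and_assoc]

theorem legalPlan_swap_of_disjoint_varset {a b : StripsAction P}
    (hd : Disjoint a.varset b.varset) {L₁ L₂ : List (StripsAction P)} {s : Set P}
    (h : LegalPlan (L₁ ++ a :: b :: L₂) s) :
    LegalPlan (L₁ ++ b :: a :: L₂) s ∧
      applySeq (L₁ ++ b :: a :: L₂) s = applySeq (L₁ ++ a :: b :: L₂) s := by
  obtain ⟨hL₁, ha, hb, hL₂⟩ := legalPlan_append.1 h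
  have hcomm := StripsAction.apply_comm
    (hd.mono a.add_subset_varset b.del_subset_varset)
    (hd.symm.mono b.add_subset_varset a.del_subset_varset) (applySeq L₁ s)
  refine ⟨legalPlan_append.2 ⟨hL₁, ?_, ?_, ?_⟩, ?_⟩
  · exact StripsAction.applicable_of_applicable_apply hb
      (hd.symm.mono b.pre_subset_varset a.add_subset_varset)
  · exact StripsAction.applicable_apply_of_applicable ha
      (hd.mono a.pre_subset_varset b.del_subset_varset)
  · rwa [hcomm]
  · simp only [applySeq_append, applySeq, hcomm]

end Plans

namespace MAProblem

variable {P Ag : Type*} {pb : MAProblem P Ag}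

lemma PrivateAction.disjoint_varset {a b : StripsAction P} {i j : Ag}
    (ha : pb.PrivateAction a i) (hb : b ∈ pb.A j) (hij : i ≠ j) :
    Disjoint a.varset b.varset :=
  Set.disjoint_left.2 fun p hpa hpb => hij (ha.2 p hpa j b hb hpb).symm

end MAProblem

theorem flipping_general {P Ag : Type*} (pb : MAProblem P Ag)
    (i j : Ag) (hij : i ≠ j) (a b : StripsAction P)
    (ha : a ∈ pb.A i) (hb : b ∈ pb.A j)
    (hpriv : pb.PrivateAction a i ∨ pb.PrivateAction b j)
    (L1 L2 : List (StripsAction P))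
    (hlegal : LegalPlan (L1 ++ a :: b :: L2) pb.I) :
    LegalPlan (L1 ++ b :: a :: L2) pb.I ∧
      applySeq (L1 ++ b :: a :: L2) pb.I = applySeq (L1 ++ a :: b :: L2) pb.I := by
  have hd : Disjoint a.varset b.varset := by
    rcases hpriv with ha' | hb'
    · exact ha'.disjoint_varset hb hij
    · exact (hb'.disjoint_varset ha hij.symm).symm
  exact legalPlan_swap_of_disjoint_varset hd hlegal

/-- Lemma 1, flipping: if `L1 ++ a :: b :: L2` is a legal plan from `I`
whose actions all belong to agents of the problem, `a` and `b` belong to two different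
agents, and at least one of them is private, then swapping `a` and `b` yields a legal
plan from `I` with the same final state. -/
theorem flipping {P Ag : Type*} [Finite P] (pb : MAProblem P Ag)
    (i j : Ag) (hij : i ≠ j) (a b : StripsAction P)
    (ha : a ∈ pb.A i) (hb : b ∈ pb.A j)
    (hpriv : pb.PrivateAction a i ∨ pb.PrivateAction b j)
    (L1 L2 : List (StripsAction P))
    (hmem : ∀ x ∈ L1 ++ a :: b :: L2, ∃ k, x ∈ pb.A k)
    (hlegal : LegalPlan (L1 ++ a :: b :: L2) pb.I) :
    LegalPlan (L1 ++ b :: a :: L2) pb.I ∧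
      applySeq (L1 ++ b :: a :: L2) pb.I = applySeq (L1 ++ a :: b :: L2) pb.I :=
  flipping_general pb i j hij a b ha hb hpriv L1 L2 hlegal
end

section
/- (Corollary 1) If an MA-STRIPS problem Π has an optimal solution P = (a_1, ..., a_k), then Π has an optimal solution P' = (a'_1, ..., a'_k) that satisfies the Corollary-1 restrictions. -/
/-- The cost of a plan is the sum of the costs of its actions. -/
def planCost {P : Type*} (cost : StripsAction P → ℝ) (L : List (StripsAction P)) : ℝ :=
  (L.map cost).sum

/-- The Corollary-1 restrictions on a plan: (1) all actions up to and including the first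
public action belong to one agent; (2) for every pair of consecutive public actions
`a_i, a_j` (no public action strictly in between), all actions `a_l` with `i < l ≤ j`
belong to one agent. -/
def Restrictions {P Ag : Type*} (pb : MAProblem P Ag) (L : List (StripsAction P)) : Prop :=
  (∀ i : Fin L.length, pb.PublicAction (L.get i) →
      (∀ l : Fin L.length, l < i → ¬ pb.PublicAction (L.get l)) →
      ∃ ag : Ag, ∀ l : Fin L.length, l ≤ i → L.get l ∈ pb.A ag) ∧
  (∀ i j : Fin L.length, i < j →
      pb.PublicAction (L.get i) → pb.PublicAction (L.get j) →
      (∀ l : Fin L.length, i < l → l < j → ¬ pb.PublicAction (L.get l)) →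
      ∃ ag : Ag, ∀ l : Fin L.length, i < l → l ≤ j → L.get l ∈ pb.A ag)

/-- A solution of an MA-STRIPS problem: a legal plan from `I`, built from the agents'
actions, whose final state contains the goal. -/
def Solution {P Ag : Type*} (pb : MAProblem P Ag) (L : List (StripsAction P)) : Prop :=
  (∀ x ∈ L, ∃ k, x ∈ pb.A k) ∧ LegalPlan L pb.I ∧ pb.G ⊆ applySeq L pb.I

/-- A solution is optimal iff no solution has strictly smaller cost. -/
def OptimalSolution {P Ag : Type*} (pb : MAProblem P Ag) (cost : StripsAction P → ℝ)
    (L : List (StripsAction P)) : Prop :=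
  Solution pb L ∧ ∀ L' : List (StripsAction P), Solution pb L' →
    planCost cost L ≤ planCost cost L'

/-!
Actions with disjoint variable sets commute. Before the first public action `a` of a plan, say
of agent `φ`, every action is private; those of agents other than `φ` touch only propositions
private to their agents, so they are independent of all actions of `φ` and can be moved past
`a` without affecting legality or the final state. This brings `φ`'s private actions, followed
by `a`, to the front, and recursion on the remaining plan yields a permutation of the original
plan, hence a solution of the same length and cost, satisfying the restrictions.
-/

namespace StripsAction

variable {P : Type*} {a b : StripsAction P}

theorem apply_comm_s5 (h : Disjoint a.varset b.varset) (s : Set P) :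
    a.apply (b.apply s) = b.apply (a.apply s) := by
  ext p
  have hp : p ∈ a.varset → p ∉ b.varset := fun hpa => Set.disjoint_left.1 h hpa
  simp only [varset, apply, Set.mem_union, Set.mem_sdiff] at hp ⊢
  tauto

theorem applicable_apply_iff (h : Disjoint a.varset b.varset) {s : Set P} :
    a.Applicable (b.apply s) ↔ a.Applicable s := by
  refine forall₂_congr fun p _ => ?_
  have hp : p ∈ a.varset → p ∉ b.varset := fun hpa => Set.disjoint_left.1 h hpa
  simp only [varset, apply, Set.mem_union, Set.mem_sdiff] at hp ⊢
  tauto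

end StripsAction

section Reaches

variable {P : Type*} {a b : StripsAction P} {L : List (StripsAction P)} {s t : Set P}

def Reaches (L : List (StripsAction P)) (s t : Set P) : Prop :=
  LegalPlan L s ∧ applySeq L s = t

@[simp]
theorem reaches_nil : Reaches [] s t ↔ s = t :=
  and_iff_right trivial

@[simp]
theorem reaches_cons : Reaches (a :: L) s t ↔ a.Applicable s ∧ Reaches L (a.apply s) t :=
  and_assoc

theorem reaches_append {X Y : List (StripsAction P)} {u : Set P} :
    Reaches (X ++ Y) s u ↔ ∃ t, Reaches X s t ∧ Reaches Y t u := by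
  induction X generalizing s with
  | nil => simp
  | cons a X ih => simp [ih, and_assoc]

theorem Reaches.swap (hab : Disjoint a.varset b.varset) (h : Reaches (a :: b :: L) s t) :
    Reaches (b :: a :: L) s t := by
  simp only [reaches_cons] at h ⊢
  obtain ⟨ha, hb, hL⟩ := h
  exact ⟨(StripsAction.applicable_apply_iff hab.symm).1 hb,
    (StripsAction.applicable_apply_iff hab).2 ha, StripsAction.apply_comm_s5 hab s ▸ hL⟩

theorem Reaches.cons_append {M : List (StripsAction P)}
    (hM : ∀ m ∈ M, Disjoint a.varset m.varset) (h : Reaches (a :: (M ++ L)) s t) :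
    Reaches (M ++ a :: L) s t := by
  induction M generalizing s with
  | nil => exact h
  | cons m M ih =>
    obtain ⟨hm, hrest⟩ := reaches_cons.1 (h.swap (hM m (List.mem_cons_self ..)))
    exact reaches_cons.2 ⟨hm, ih (fun m' hm' => hM m' (List.mem_cons_of_mem _ hm')) hrest⟩

theorem Reaches.filter_append_filter (p : StripsAction P → Bool) {B : List (StripsAction P)}
    (hB : ∀ x ∈ B, p x = false → ∀ y ∈ B, p y → Disjoint x.varset y.varset)
    (h : Reaches (B ++ L) s t) :
    Reaches (B.filter p ++ (B.filter (fun x => !p x) ++ L)) s t := by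
  induction B generalizing s with
  | nil => exact h
  | cons x B ih =>
    obtain ⟨hx, hrest⟩ := reaches_cons.1 h
    have := ih (fun y hy hpy z hz hpz => hB y (.tail _ hy) hpy z (.tail _ hz) hpz) hrest
    cases hpx : p x
    · simp only [List.filter_cons, hpx]
      refine Reaches.cons_append (fun m hm => ?_) (reaches_cons.2 ⟨hx, this⟩)
      exact hB x (.head _) hpx m (.tail _ (List.mem_filter.1 hm).1) (List.mem_filter.1 hm).2
    · simpa [List.filter_cons, hpx] using reaches_cons.2 ⟨hx, this⟩

end Reaches

namespace MAProblem
variable {P Ag : Type*} (pb : MAProblem P Ag)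

def FirstSegmentIn (ag : Ag) (L : List (StripsAction P)) : Prop :=
  ∀ i : Fin L.length, pb.PublicAction (L.get i) →
    (∀ l < i, ¬ pb.PublicAction (L.get l)) → ∀ l ≤ i, L.get l ∈ pb.A ag

variable {pb} {x : StripsAction P} {ag : Ag} {L : List (StripsAction P)}

theorem firstSegmentIn_cons_of_public (hx : pb.PublicAction x) (hxA : x ∈ pb.A ag) :
    pb.FirstSegmentIn ag (x :: L) := by
  intro i _ hbefore l hl
  induction i using Fin.cases with
  | zero => rwa [Fin.le_zero_iff.1 hl]
  | succ i => exact absurd hx (hbefore 0 (Fin.succ_pos i))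

theorem FirstSegmentIn.cons_of_not_public (hL : pb.FirstSegmentIn ag L)
    (hx : ¬ pb.PublicAction x) (hxA : x ∈ pb.A ag) : pb.FirstSegmentIn ag (x :: L) := by
  intro i hi hbefore l hl
  induction i using Fin.cases with
  | zero => exact absurd hi hx
  | succ i =>
    induction l using Fin.cases with
    | zero => exact hxA
    | succ l =>
      exact hL i hi (fun l' hl' => hbefore l'.succ (Fin.succ_lt_succ_iff.2 hl')) l
        (Fin.succ_le_succ_iff.1 hl)

theorem firstSegmentIn_append_cons {F : List (StripsAction P)}
    (hF : ∀ y ∈ F, y ∈ pb.A ag ∧ ¬ pb.PublicAction y) (hx : pb.PublicAction x)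
    (hxA : x ∈ pb.A ag) : pb.FirstSegmentIn ag (F ++ x :: L) := by
  induction F with
  | nil => exact firstSegmentIn_cons_of_public hx hxA
  | cons y F ih =>
    exact (ih fun z hz => hF z (.tail _ hz)).cons_of_not_public (hF y (.head _)).2
      (hF y (.head _)).1

end MAProblem

section Restrictions

variable {P Ag : Type*} {pb : MAProblem P Ag} {x : StripsAction P} {ag : Ag}
  {L : List (StripsAction P)}

theorem restrictions_of_forall_not_public (h : ∀ x ∈ L, ¬ pb.PublicAction x) :
    Restrictions pb L :=
  ⟨fun i hi _ => absurd hi (h _ (L.get_mem i)),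
    fun i _ _ hi _ _ => absurd hi (h _ (L.get_mem i))⟩

theorem Restrictions.cons (hL : Restrictions pb L) (hfirst : pb.FirstSegmentIn ag (x :: L)) :
    Restrictions pb (x :: L) := by
  refine ⟨fun i hi hbefore => ⟨ag, hfirst i hi hbefore⟩, fun i j hij hi hj hbetween => ?_⟩
  induction j using Fin.cases with
  | zero => exact absurd hij (Fin.not_lt_zero _)
  | succ j =>
    obtain ⟨ag', hag'⟩ :
        ∃ ag', ∀ l : Fin L.length, i < l.succ → l ≤ j → L.get l ∈ pb.A ag' := by
      induction i using Fin.cases with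
      | zero =>
        obtain ⟨ag', hag'⟩ := hL.1 j hj fun l hl =>
          hbetween l.succ (Fin.succ_pos l) (Fin.succ_lt_succ_iff.2 hl)
        exact ⟨ag', fun l _ hl => hag' l hl⟩
      | succ i =>
        obtain ⟨ag', hag'⟩ := hL.2 i j (Fin.succ_lt_succ_iff.1 hij) hi hj fun l hil hlj =>
          hbetween l.succ (Fin.succ_lt_succ_iff.2 hil) (Fin.succ_lt_succ_iff.2 hlj)
        exact ⟨ag', fun l hil hlj => hag' l (Fin.succ_lt_succ_iff.1 hil) hlj⟩
    refine ⟨ag', fun l hil hlj => ?_⟩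
    induction l using Fin.cases with
    | zero => exact absurd hil (Fin.not_lt_zero _)
    | succ l => exact hag' l hil (Fin.succ_le_succ_iff.1 hlj)

theorem Restrictions.append_cons {F : List (StripsAction P)} (hL : Restrictions pb L)
    (hF : ∀ y ∈ F, y ∈ pb.A ag ∧ ¬ pb.PublicAction y) (hx : pb.PublicAction x)
    (hxA : x ∈ pb.A ag) : Restrictions pb (F ++ x :: L) := by
  induction F with
  | nil => exact hL.cons (MAProblem.firstSegmentIn_cons_of_public hx hxA)
  | cons y F ih =>
    exact (ih fun z hz => hF z (.tail _ hz)).cons (MAProblem.firstSegmentIn_append_cons hF hx hxA)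

end Restrictions

namespace MAProblem
variable {P Ag : Type*} {pb : MAProblem P Ag}

theorem PrivateAction.disjoint_varset_s5 {x y : StripsAction P} {i j : Ag}
    (hx : pb.PrivateAction x i) (hy : y ∈ pb.A j) (hij : j ≠ i) : Disjoint x.varset y.varset :=
  Set.disjoint_left.2 fun p hpx hpy => hij (hx.2 p hpx j y hy hpy)

theorem exists_privateAction_of_not_public {x : StripsAction P} {k : Ag} (hk : x ∈ pb.A k)
    (h : ¬ pb.PublicAction x) : ∃ i, pb.PrivateAction x i := by
  simpa [PublicAction, show ∃ i, x ∈ pb.A i from ⟨k, hk⟩] using h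

end MAProblem

theorem Reaches.filter_mem_append_cons {P Ag : Type*} {pb : MAProblem P Ag} {ag : Ag}
    [DecidablePred (· ∈ pb.A ag)] {B T : List (StripsAction P)} {x : StripsAction P}
    {s t : Set P} (hB : ∀ y ∈ B, (∃ k, y ∈ pb.A k) ∧ ¬ pb.PublicAction y)
    (hxA : x ∈ pb.A ag) (h : Reaches (B ++ x :: T) s t) :
    Reaches (B.filter (· ∈ pb.A ag) ++ x :: (B.filter (· ∉ pb.A ag) ++ T)) s t := by
  -- `x` is sorted together with `B`, so that it ends up right after the actions of `ag`.
  have hindep : ∀ y ∈ B ++ [x], decide (y ∈ pb.A ag) = false →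
      ∀ z ∈ B ++ [x], decide (z ∈ pb.A ag) → Disjoint y.varset z.varset := by
    intro y hy hyA z _ hzA
    simp only [decide_eq_false_iff_not, decide_eq_true_eq] at hyA hzA
    have hyB : y ∈ B := by
      rcases List.mem_append.1 hy with hy | hy
      · exact hy
      · exact absurd (List.mem_singleton.1 hy ▸ hxA) hyA
    obtain ⟨⟨k, hk⟩, hy⟩ := hB y hyB
    obtain ⟨i, hi⟩ := MAProblem.exists_privateAction_of_not_public hk hy
    refine hi.disjoint_varset_s5 hzA ?_
    rintro rfl
    exact hyA hi.1
  simpa [List.filter_append, hxA] using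
    Reaches.filter_append_filter _ hindep (L := T) (by simpa using h)

open List in
theorem exists_perm_reaches_restrictions {P Ag : Type*} (pb : MAProblem P Ag)
    {L : List (StripsAction P)} {s t : Set P} (hL : ∀ x ∈ L, ∃ k, x ∈ pb.A k)
    (h : Reaches L s t) : ∃ L', L' ~ L ∧ Reaches L' s t ∧ Restrictions pb L' := by
  classical
  induction hn : L.length using Nat.strong_induction_on generalizing L s with
  | _ n ih =>
  cases hfind : L.find? (fun x => decide (pb.PublicAction x)) with
  | none =>
    refine ⟨L, .rfl, h, restrictions_of_forall_not_public fun x hx => ?_⟩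
    simpa using List.find?_eq_none.1 hfind x hx
  | some pub =>
    obtain ⟨hpub, B, T, rfl, hB⟩ := List.find?_eq_some_iff_append.1 hfind
    simp only [decide_eq_true_eq, Bool.not_eq_true', decide_eq_false_iff_not] at hpub hB
    obtain ⟨ag, hag⟩ := hpub.1
    set F := B.filter (· ∈ pb.A ag)
    set G := B.filter (· ∉ pb.A ag)
    obtain ⟨u, hFu, hGTu⟩ : ∃ u, Reaches (F ++ [pub]) s u ∧ Reaches (G ++ T) u t := by
      refine reaches_append.1 ?_
      rw [List.append_assoc, List.singleton_append]
      exact h.filter_mem_append_cons (fun y hy => ⟨hL y (by simp [hy]), hB y hy⟩) hag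
    have hlen : (G ++ T).length < n := by
      have : G.length ≤ B.length := List.length_filter_le _ _
      simp only [← hn, List.length_append, List.length_cons]
      omega
    obtain ⟨T', hperm, hT', hrest⟩ := ih _ hlen (fun x hx => hL x (by
      simp only [G, List.mem_append, List.mem_filter, List.mem_cons] at hx ⊢
      tauto)) hGTu rfl
    refine ⟨F ++ pub :: T', ?_, ?_, hrest.append_cons ?_ hpub hag⟩
    · calc F ++ pub :: T'
          _ ~ F ++ pub :: (G ++ T) := (hperm.cons pub).append_left _
          _ ~ pub :: (F ++ G ++ T) := by simp
          _ ~ pub :: (B ++ T) := by simpa [F, G] using (List.filter_append_perm _ B).append_right T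
          _ ~ B ++ pub :: T := List.perm_middle.symm
    · simpa using reaches_append.2 ⟨u, hFu, hT'⟩
    · simpa [F] using fun y hy hyA => ⟨hyA, hB y hy⟩

theorem exists_restricted_optimal_solution_general {P Ag : Type*} (pb : MAProblem P Ag)
    (cost : StripsAction P → ℝ) (L : List (StripsAction P))
    (hopt : OptimalSolution pb cost L) :
    ∃ L' : List (StripsAction P), L'.length = L.length ∧
      OptimalSolution pb cost L' ∧ Restrictions pb L' := by
  obtain ⟨⟨hmem, hlegal, hgoal⟩, hmin⟩ := hopt
  obtain ⟨L', hperm, ⟨hlegal', hstate⟩, hrest⟩ :=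
    exists_perm_reaches_restrictions pb hmem ⟨hlegal, rfl⟩
  have hsol : Solution pb L' :=
    ⟨fun x hx => hmem x (hperm.subset hx), hlegal', hstate ▸ hgoal⟩
  have hcost : planCost cost L' = planCost cost L := (hperm.map cost).sum_eq
  exact ⟨L', hperm.length_eq, ⟨hsol, fun L'' hL'' => hcost ▸ hmin L'' hL''⟩, hrest⟩

/-- Corollary 1: if an MA-STRIPS problem has an optimal solution
`P = (a_1, ..., a_k)`, then it has an optimal solution `P' = (a'_1, ..., a'_k)` (of the
same length) satisfying the Corollary-1 restrictions. -/
theorem exists_restricted_optimal_solution {P Ag : Type*} [Finite P] (pb : MAProblem P Ag)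
    (cost : StripsAction P → ℝ) (L : List (StripsAction P))
    (hopt : OptimalSolution pb cost L) :
    ∃ L' : List (StripsAction P), L'.length = L.length ∧
      OptimalSolution pb cost L' ∧ Restrictions pb L' :=
  exists_restricted_optimal_solution_general pb cost L hopt
end
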